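/- For real n×d matrices A and B and any s with d ≤ s ≤ n−1, det(A^⊤ B) = (1 / (n−d choose s−d)) · Σ_{S : |S| = s} det(A_S^⊤ B_S), where A_S, B_S denote the submatrices of rows indexed by S. -/
import Mathlib


open Matrix Finset

noncomputable section

variable {n d : ℕ}

/-- The d×d Gram-type matrix with sum restricted to a finset `U`. -/
private def MU (A B : Matrix (Fin n) (Fin d) ℝ) (U : Finset (Fin n)) :
    Matrix (Fin d) (Fin d) ℝ :=
  fun j k => ∑ i ∈ U, A i j * B i k

private lemma aux_noninj (A B : Matrix (Fin n) (Fin d) ℝ) {p : Fin d → Fin n}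
    (H : ¬Function.Injective p) :
    (∑ σ : Equiv.Perm (Fin d),
      ((Equiv.Perm.sign σ : ℤ) : ℝ) * ∏ k, A (p k) (σ k) * B (p k) k) = 0 := by
  obtain ⟨i, j, hpij, hij⟩ : ∃ i j, p i = p j ∧ i ≠ j := by
    rw [Function.Injective] at H
    push_neg at H
    obtain ⟨i, j, h1, h2⟩ := H
    exact ⟨i, j, h1, h2⟩
  refine sum_involution (fun σ _ => σ * Equiv.swap i j)
    (fun σ _ => ?_)
    (fun σ _ _ => (not_congr Equiv.mul_swap_eq_iff).mpr hij)
    (fun _ _ => mem_univ _)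
    (fun σ _ => Equiv.mul_swap_involutive i j σ)
  have h1 : (∏ x, A (p x) (σ x)) = ∏ x, A (p x) ((σ * Equiv.swap i j) x) := by
    refine Fintype.prod_equiv (Equiv.swap i j) _ _ (fun x => ?_)
    simp only [Equiv.Perm.coe_mul, Function.comp_apply, Equiv.swap_apply_self]
    rw [Equiv.apply_swap_eq_self hpij]
  simp only [prod_mul_distrib]
  rw [← h1, Equiv.Perm.sign_mul, Equiv.Perm.sign_swap hij]
  push_cast
  ring

private lemma det_MU (A B : Matrix (Fin n) (Fin d) ℝ) (U : Finset (Fin n)) :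
    (MU A B U).det
      = ∑ p ∈ (Fintype.piFinset fun _ : Fin d => U).filter Function.Injective,
          ∑ σ : Equiv.Perm (Fin d),
            ((Equiv.Perm.sign σ : ℤ) : ℝ) * ∏ k, A (p k) (σ k) * B (p k) k := by
  have h1 : (MU A B U).det
      = ∑ p ∈ Fintype.piFinset fun _ : Fin d => U,
          ∑ σ : Equiv.Perm (Fin d),
            ((Equiv.Perm.sign σ : ℤ) : ℝ) * ∏ k, A (p k) (σ k) * B (p k) k := by
    simp only [det_apply', MU, prod_univ_sum, mul_sum]
    rw [Finset.sum_comm]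
  rw [h1]
  refine (sum_subset (filter_subset _ _) fun p _ hp => aux_noninj A B ?_).symm
  simp only [mem_filter] at hp
  intro h
  exact hp ⟨by assumption, h⟩

private lemma regroup_injective (f : (Fin d → Fin n) → ℝ) (U : Finset (Fin n)) :
    ∑ p ∈ (Fintype.piFinset fun _ : Fin d => U).filter Function.Injective, f p
      = ∑ T ∈ Finset.powersetCard d U,
          ∑ p ∈ (Fintype.piFinset fun _ : Fin d => T).filter Function.Injective, f p := by
  rw [← Finset.sum_sigma (Finset.powersetCard d U)
    (fun T => (Fintype.piFinset fun _ : Fin d => T).filter Function.Injective)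
    (fun x => f x.2)]
  refine Finset.sum_nbij' (i := fun p => ⟨Finset.univ.image p, p⟩) (j := fun x => x.2)
    ?_ ?_ ?_ ?_ ?_
  · intro p h
    simp only [mem_filter, Fintype.mem_piFinset] at h
    simp only [mem_sigma, mem_powersetCard, mem_filter, Fintype.mem_piFinset]
    refine ⟨⟨fun x hx => ?_, ?_⟩, fun k => mem_image_of_mem p (mem_univ k), h.2⟩
    · obtain ⟨k, _, rfl⟩ := mem_image.1 hx
      exact h.1 k
    · rw [Finset.card_image_of_injective _ h.2, card_univ, Fintype.card_fin]
  · rintro ⟨T, p⟩ h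
    simp only [mem_sigma, mem_powersetCard, mem_filter, Fintype.mem_piFinset] at h ⊢
    exact ⟨fun k => h.1.1 (h.2.1 k), h.2.2⟩
  · intro p h
    rfl
  · rintro ⟨T, p⟩ h
    simp only [mem_sigma, mem_powersetCard, mem_filter, Fintype.mem_piFinset] at h
    obtain ⟨⟨hTU, hTd⟩, hpT, hpinj⟩ := h
    have himage : Finset.univ.image p = T := by
      apply Finset.eq_of_subset_of_card_le
      · intro x hx
        obtain ⟨k, _, rfl⟩ := mem_image.1 hx
        exact hpT k
      · rw [Finset.card_image_of_injective _ hpinj, card_univ, Fintype.card_fin, hTd]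
    exact Sigma.ext himage (by simp)
  · intro p h
    rfl

private lemma det_MU_sum (A B : Matrix (Fin n) (Fin d) ℝ) (U : Finset (Fin n)) :
    (MU A B U).det = ∑ T ∈ Finset.powersetCard d U, (MU A B T).det := by
  simp only [det_MU]
  exact regroup_injective _ U

private lemma count_supersets {s : ℕ} (T : Finset (Fin n)) (hT : T.card = d)
    (hds : d ≤ s) (hsn : s ≤ n) :
    ((Finset.powersetCard s (Finset.univ : Finset (Fin n))).filter fun S => T ⊆ S).card
      = (n - d).choose (s - d) := by
  have key : ((Finset.powersetCard s (Finset.univ : Finset (Fin n))).filter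
        fun S => T ⊆ S).card
      = (Finset.powersetCard (s - d) (Finset.univ \ T)).card := by
    refine Finset.card_bij (fun S _ => S \ T) ?_ ?_ ?_
    · intro S hS
      simp only [mem_filter, mem_powersetCard] at hS
      obtain ⟨⟨_, hScard⟩, hTS⟩ := hS
      rw [mem_powersetCard]
      constructor
      · exact sdiff_subset_sdiff (subset_univ S) Subset.rfl
      · rw [Finset.card_sdiff_of_subset hTS, hScard, hT]
    · intro S₁ hS₁ S₂ hS₂ h
      simp only [mem_filter, mem_powersetCard] at hS₁ hS₂
      have e1 : S₁ = S₁ \ T ∪ T := by rw [Finset.sdiff_union_of_subset hS₁.2]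
      have e2 : S₂ = S₂ \ T ∪ T := by rw [Finset.sdiff_union_of_subset hS₂.2]
      rw [e1, e2, show S₁ \ T = S₂ \ T from h]
    · intro V hV
      rw [mem_powersetCard] at hV
      refine ⟨V ∪ T, ?_, ?_⟩
      · simp only [mem_filter, mem_powersetCard]
        have hdisj : Disjoint V T := by
          intro x hxV hxT
          intro a ha
          have h1 := hxV ha
          have h2 := hxT ha
          have := hV.1 h1
          rw [Finset.mem_sdiff] at this
          exact absurd h2 this.2
        refine ⟨⟨subset_univ _, ?_⟩, subset_union_right⟩
        rw [Finset.card_union_of_disjoint hdisj, hV.2, hT]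
        omega
      · show (V ∪ T) \ T = V
        rw [Finset.union_sdiff_right]
        apply Finset.sdiff_eq_self_of_disjoint
        intro x hxV hxT
        intro a ha
        have := hV.1 (hxV ha)
        rw [Finset.mem_sdiff] at this
        exact absurd (hxT ha) this.2
  rw [key, Finset.card_powersetCard, Finset.card_sdiff_of_subset (subset_univ T), card_univ,
    Fintype.card_fin, hT]

end

noncomputable section

/-- The submatrix of `A` consisting of the rows indexed by the subset `S`. -/
def rowSub {n d : ℕ} (A : Matrix (Fin n) (Fin d) ℝ) (S : Finset (Fin n)) :
    Matrix {i // i ∈ S} (Fin d) ℝ :=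
  A.submatrix (fun i => (i : Fin n)) id

/-- Asymmetric generalized Cauchy–Binet:
`det(A^⊤ B) = (1/(n−d choose s−d)) Σ_{|S|=s} det(A_S^⊤ B_S)` for `d ≤ s ≤ n−1`. -/
theorem asymmetric_generalized_cauchy_binet {n d : ℕ}
    (A B : Matrix (Fin n) (Fin d) ℝ) (s : ℕ) (hds : d ≤ s) (hsn : s ≤ n - 1) :
    (Aᵀ * B).det
      = (1 / ((n - d).choose (s - d) : ℝ)) *
          ∑ S ∈ Finset.powersetCard s (Finset.univ : Finset (Fin n)),
            ((rowSub A S)ᵀ * rowSub B S).det := by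
  have hsn' : s ≤ n := le_trans hsn (Nat.sub_le n 1)
  have hAB : Aᵀ * B = MU A B Finset.univ := by
    ext j k
    simp [mul_apply, MU, transpose_apply]
  have hS : ∀ S : Finset (Fin n), ((rowSub A S)ᵀ * rowSub B S) = MU A B S := by
    intro S
    ext j k
    simp only [mul_apply, MU, transpose_apply, rowSub, submatrix_apply, id]
    exact Finset.sum_coe_sort S (fun i => A i j * B i k)
  have hCpos : 0 < (n - d).choose (s - d) := Nat.choose_pos (by omega)
  have hC : ((n - d).choose (s - d) : ℝ) ≠ 0 := by
    exact_mod_cast hCpos.ne'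
  simp only [hS]
  have h2 : ∑ S ∈ Finset.powersetCard s (Finset.univ : Finset (Fin n)), (MU A B S).det
      = ∑ S ∈ Finset.powersetCard s (Finset.univ : Finset (Fin n)),
          ∑ T ∈ Finset.powersetCard d S, (MU A B T).det :=
    Finset.sum_congr rfl fun S _ => det_MU_sum A B S
  have h3 : ∑ S ∈ Finset.powersetCard s (Finset.univ : Finset (Fin n)),
        ∑ T ∈ Finset.powersetCard d S, (MU A B T).det
      = ∑ T ∈ Finset.powersetCard d (Finset.univ : Finset (Fin n)),
          ∑ _S ∈ (Finset.powersetCard s (Finset.univ : Finset (Fin n))).filter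
            (fun S => T ⊆ S), (MU A B T).det := by
    refine Finset.sum_comm' (fun S T => ?_)
    simp only [mem_powersetCard, mem_filter]
    constructor
    · rintro ⟨⟨h1, h2⟩, h3, h4⟩
      exact ⟨⟨⟨h1, h2⟩, h3⟩, Finset.subset_univ _, h4⟩
    · rintro ⟨⟨⟨h1, h2⟩, h3⟩, _, h4⟩
      exact ⟨⟨h1, h2⟩, h3, h4⟩
  have h4 : ∑ T ∈ Finset.powersetCard d (Finset.univ : Finset (Fin n)),
        ∑ _S ∈ (Finset.powersetCard s (Finset.univ : Finset (Fin n))).filter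
          (fun S => T ⊆ S), (MU A B T).det
      = ((n - d).choose (s - d) : ℝ) *
          ∑ T ∈ Finset.powersetCard d (Finset.univ : Finset (Fin n)), (MU A B T).det := by
    rw [Finset.mul_sum]
    refine Finset.sum_congr rfl fun T hT => ?_
    rw [Finset.sum_const, count_supersets T (Finset.mem_powersetCard.1 hT).2 hds hsn',
      nsmul_eq_mul]
  rw [h2, h3, h4, hAB, det_MU_sum A B Finset.univ]
  field_simp
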